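/- Trace identity: for every finite simple graph G, tr(|H|²) = 2·tr(L²) − 2·(v + e), where v + e is the total number of simplices of the 1-dimensional complex. -/

import Mathlib

/-!
With `B` the vertex–edge incidence matrix, `|d| + |d|ᵀ = [[0, B], [Bᵀ, 0]]`, so
`|H| = diag(B Bᵀ, Bᵀ B)` and `tr(|H|²) = 2 tr((Bᵀ B)²)` by cyclicity of the trace.
An edge has two vertices and two distinct edges share at most one, so `Bᵀ B` is the edge block
of `L` plus the identity: `L = [[1, B], [Bᵀ, Bᵀ B - 1]]`. Expanding, `tr(L²) = v + e + tr((Bᵀ B)²)`.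
-/


open Matrix

variable {V : Type*} [Fintype V] [DecidableEq V]

/-- The simplices of the 1-dimensional simplicial complex of a graph: vertices and edges. -/
abbrev Simplex (G : SimpleGraph V) [DecidableRel G.Adj] := V ⊕ G.edgeSet

variable (G : SimpleGraph V) [DecidableRel G.Adj]

/-- The vertex set of a simplex. -/
def sVerts : Simplex G → Set V
  | Sum.inl u => {u}
  | Sum.inr f => {w | w ∈ (f : Sym2 V)}

instance (x : Simplex G) (w : V) : Decidable (w ∈ sVerts G x) :=
  match x with
  | Sum.inl u => decidable_of_iff (w = u) (by simp [sVerts])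
  | Sum.inr f => decidable_of_iff (w ∈ (f : Sym2 V)) (by simp [sVerts])

/-- Two simplices touch if their vertex sets intersect. -/
def touches (x y : Simplex G) : Prop := ∃ w, w ∈ sVerts G x ∧ w ∈ sVerts G y

instance : DecidableRel (touches G) := fun _ _ => Fintype.decidableExistsFintype

/-- The connection Laplacian. -/
def connL : Matrix (Simplex G) (Simplex G) ℤ :=
  Matrix.of fun x y => if touches G x y then 1 else 0

/-- The sign-less incidence matrix. -/
def absd : Matrix (Simplex G) (Simplex G) ℤ :=
  Matrix.of fun a b =>
    match a, b with
    | Sum.inr f, Sum.inl u => if u ∈ (f : Sym2 V) then 1 else 0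
    | _, _ => 0

/-- The sign-less Hodge Laplacian. -/
def absH : Matrix (Simplex G) (Simplex G) ℤ := (absd G + (absd G)ᵀ) ^ 2

set_option linter.unusedSectionVars false

open Finset

namespace Matrix

variable {m n R : Type*} [Fintype m] [Fintype n]

theorem trace_fromBlocks [AddCommMonoid R] (A : Matrix m m R) (B : Matrix m n R)
    (C : Matrix n m R) (D : Matrix n n R) :
    trace (fromBlocks A B C D) = trace A + trace D := by
  simp [trace, Fintype.sum_sum_type]

variable [DecidableEq m] [DecidableEq n]

theorem trace_fromBlocks_sq [CommSemiring R] (A : Matrix m m R) (B : Matrix m n R)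
    (C : Matrix n m R) (D : Matrix n n R) :
    trace (fromBlocks A B C D ^ 2) = trace (A ^ 2) + 2 * trace (B * C) + trace (D ^ 2) := by
  rw [sq, sq, sq, fromBlocks_multiply, trace_fromBlocks, trace_add, trace_add,
    trace_mul_comm C B]
  ring

theorem fromBlocks_zero_diag_sq [Semiring R] (B : Matrix m n R) (C : Matrix n m R) :
    fromBlocks 0 B C 0 ^ 2 = fromBlocks (B * C) 0 0 (C * B) := by
  simp [sq, fromBlocks_multiply]

theorem trace_sq_sq_fromBlocks_zero_transpose [CommRing R] (B : Matrix m n R) :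
    trace ((fromBlocks 0 B Bᵀ 0 ^ 2) ^ 2)
      = 2 * trace (fromBlocks 1 B Bᵀ (Bᵀ * B - 1) ^ 2)
        - 2 * ((Fintype.card m : R) + Fintype.card n) := by
  have hcycle : trace ((B * Bᵀ) ^ 2) = trace ((Bᵀ * B) ^ 2) := by
    rw [sq, sq, Matrix.mul_assoc, trace_mul_comm, Matrix.mul_assoc, Matrix.mul_assoc,
      Matrix.mul_assoc]
  have hsq : (Bᵀ * B - 1) ^ 2 = (Bᵀ * B) ^ 2 - Bᵀ * B - Bᵀ * B + 1 := by
    noncomm_ring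
  rw [fromBlocks_zero_diag_sq, trace_fromBlocks_sq, trace_fromBlocks_sq, hsq, hcycle,
    trace_mul_comm B]
  simp only [one_pow, trace_one, trace_add, trace_sub, Matrix.zero_mul, trace_zero]
  ring

end Matrix

theorem Sym2.card_filter_mem_and_mem_of_ne {α : Type*} [Fintype α] [DecidableEq α]
    {z z' : Sym2 α} (hne : z ≠ z') :
    #{u | u ∈ z ∧ u ∈ z'} = if ∃ u, u ∈ z ∧ u ∈ z' then 1 else 0 := by
  split_ifs with h
  · obtain ⟨u, hu⟩ := h
    refine le_antisymm (card_le_one.mpr fun x hx y hy => ?_) (card_pos.mpr ⟨u, by simpa⟩)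
    simp only [mem_filter, mem_univ, true_and] at hx hy
    by_contra hxy
    exact hne (Sym2.eq_of_ne_mem hxy hx.1 hy.1 hx.2 hy.2)
  · simpa using h

theorem Sym2.card_filter_mem_of_not_isDiag {α : Type*} [Fintype α] [DecidableEq α]
    {z : Sym2 α} (hz : ¬z.IsDiag) : #{u | u ∈ z} = 2 := by
  rw [← z.card_toFinset_of_not_isDiag hz]
  congr 1
  ext
  simp [Sym2.mem_toFinset]

def incidence : Matrix V G.edgeSet ℤ := of fun u f => if u ∈ (f : Sym2 V) then 1 else 0

theorem absd_add_transpose :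
    absd G + (absd G)ᵀ = fromBlocks 0 (incidence G) (incidence G)ᵀ 0 := by
  ext (u | f) (w | g) <;> simp [absd, incidence]

theorem transpose_incidence_mul_apply (f g : G.edgeSet) :
    ((incidence G)ᵀ * incidence G) f g = #{u | u ∈ (f : Sym2 V) ∧ u ∈ (g : Sym2 V)} := by
  simp only [mul_apply, transpose_apply, incidence, of_apply, ite_zero_mul_ite_zero, mul_one,
    sum_boole]

theorem connL_eq_fromBlocks :
    connL G = fromBlocks 1 (incidence G) (incidence G)ᵀ ((incidence G)ᵀ * incidence G - 1) := by
  ext (u | f) (w | g)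
  · simp [connL, touches, sVerts, one_apply]
  · simp [connL, touches, sVerts, incidence]
  · simp [connL, touches, sVerts, incidence]
  · simp only [connL, touches, sVerts, of_apply, fromBlocks_apply₂₂, Matrix.sub_apply, one_apply,
      transpose_incidence_mul_apply]
    rcases eq_or_ne f g with rfl | hfg
    · simpa [Sym2.card_filter_mem_of_not_isDiag (G.not_isDiag_of_mem_edgeSet f.2)] using
        ⟨_, Sym2.out_fst_mem (f : Sym2 V)⟩
    · simp [Sym2.card_filter_mem_and_mem_of_ne (Subtype.coe_ne_coe.mpr hfg), hfg]

/-- Trace identity: `tr(|H|²) = 2 tr(L²) - 2(v+e)`. -/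
theorem trace_identity :
    Matrix.trace (absH G ^ 2)
      = 2 * Matrix.trace (connL G ^ 2)
        - 2 * ((Fintype.card V : ℤ) + (Fintype.card G.edgeSet : ℤ)) := by
  rw [absH, absd_add_transpose, connL_eq_fromBlocks]
  exact trace_sq_sq_fromBlocks_zero_transpose (incidence G)
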